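/- In any perm algebra A with derivation d, the operation a ≻ b := d(a)·b satisfies ⟨x₁, x₂, x₃⟩ ≻ x₄ = ⟨x₁, x₃, x₂⟩ ≻ x₄, where ⟨a,b,c⟩ = (a ≻ b) ≻ c − a ≻ (b ≻ c). -/

import Mathlib

/-!
By the Leibniz rule the associator of `≻` collapses to `⟨a, b, c⟩ = d²(a) b c`, so
`⟨x₁, x₂, x₃⟩ ≻ x₄ = d(d²(x₁) x₂ x₃) x₄`. Expanding `d` once more gives three products of
four factors, and in a perm algebra such a product is unchanged by swapping its two middle
factors; this swaps `x₂` and `x₃` (together with `d x₂` and `d x₃`).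
-/

/-- `a ≻ b := d a * b` in a perm algebra with derivation. -/
def succOp {A : Type*} [NonUnitalRing A] (d : A → A) (a b : A) : A := d a * b

/-- The associator of `≻`. -/
def succAssoc {A : Type*} [NonUnitalRing A] (d : A → A) (a b c : A) : A :=
  succOp d (succOp d a b) c - succOp d a (succOp d b c)

section PermDerivation

variable {A : Type*} [NonUnitalRing A]

theorem mul_mul_mul_swap_of_perm (perm : ∀ a b c : A, a * b * c = b * a * c) (p q r s : A) :
    p * q * r * s = p * r * q * s := by
  rw [perm (p * q) r s, ← mul_assoc r p q, perm r p q]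

theorem succAssoc_eq_mul (d : A → A) (hleib : ∀ a b : A, d (a * b) = d a * b + a * d b)
    (a b c : A) : succAssoc d a b c = d (d a) * b * c := by
  simp only [succAssoc, succOp, hleib, add_mul, mul_assoc]
  abel

theorem map_mul_mul_mul_swap_of_perm (perm : ∀ a b c : A, a * b * c = b * a * c)
    (d : A → A) (hleib : ∀ a b : A, d (a * b) = d a * b + a * d b) (a b c e : A) :
    d (a * b * c) * e = d (a * c * b) * e := by
  have swap := mul_mul_mul_swap_of_perm perm
  simp only [hleib, add_mul]
  rw [swap (d a) b c, swap a (d b) c, swap a b (d c)]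
  abel

end PermDerivation

theorem perm_der_succ_assoc_right_identity_general {A : Type*} [NonUnitalRing A]
    (perm : ∀ a b c : A, a * b * c = b * a * c)
    (d : A → A)
    (hleib : ∀ a b : A, d (a * b) = d a * b + a * d b)
    (x₁ x₂ x₃ x₄ : A) :
    succOp d (succAssoc d x₁ x₂ x₃) x₄ = succOp d (succAssoc d x₁ x₃ x₂) x₄ := by
  rw [succOp, succOp, succAssoc_eq_mul d hleib, succAssoc_eq_mul d hleib]
  exact map_mul_mul_mul_swap_of_perm perm d hleib _ _ _ _

/-- In any perm algebra with derivation `d`, the operation `a ≻ b := d a * b`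
satisfies `⟨x₁,x₂,x₃⟩ ≻ x₄ = ⟨x₁,x₃,x₂⟩ ≻ x₄`. -/
theorem perm_der_succ_assoc_right_identity {A : Type*} [NonUnitalRing A]
    (perm : ∀ a b c : A, a * b * c = b * a * c)
    (d : A → A) (hadd : ∀ a b : A, d (a + b) = d a + d b)
    (hleib : ∀ a b : A, d (a * b) = d a * b + a * d b)
    (x₁ x₂ x₃ x₄ : A) :
    succOp d (succAssoc d x₁ x₂ x₃) x₄ = succOp d (succAssoc d x₁ x₃ x₂) x₄ :=
  perm_der_succ_assoc_right_identity_general perm d hleib x₁ x₂ x₃ x₄
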